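/- arXiv:1907.02443 — 5 statements merged into one kernel-verified Lean document; each statement's English description precedes it below -/
import Mathlib

section
/- There exists N ∈ ℕ such that for every perfect square n = k² ≥ N (k ∈ ℕ), the number of pairs (i,j) with i, j ∈ {0, 1, …, k−1} satisfying 4·sin²(iπ/(2k)) + 4·sin²(jπ/(2k)) < n^{−1/3} is strictly less than n^{2/3}. (These quantities 4·sin²(iπ/(2k)) + 4·sin²(jπ/(2k)) are, up to the average-degree normalization, the eigenvalues of the Laplacian of the k×k square lattice graph; the claim says that the effective dimension m_A of the lattice is at most n^{2/3}.) -/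
open Real Finset

theorem lattice_effective_dimension :
    ∃ N : ℕ, ∀ n k : ℕ, n = k ^ 2 → N ≤ n →
      (((Finset.range k ×ˢ Finset.range k).filter fun q : ℕ × ℕ =>
          4 * Real.sin (q.1 * Real.pi / (2 * k)) ^ 2
            + 4 * Real.sin (q.2 * Real.pi / (2 * k)) ^ 2
            < (n : ℝ) ^ (-(1 : ℝ) / 3)).card : ℝ)
        < (n : ℝ) ^ ((2 : ℝ) / 3) := by
  use 1000
  intro n k hn hN
  have hk : 0 < k := by
    rcases Nat.eq_zero_or_pos k with h | h
    · subst h; simp at hn; omega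
    · exact h
  have hn0 : (0 : ℝ) < n := by
    have : 0 < n := by omega
    exact_mod_cast this
  set t : ℝ := (n : ℝ) ^ ((1 : ℝ)/3) with ht
  have ht0 : 0 < t := Real.rpow_pos_of_pos hn0 _
  have hnt : (n : ℝ) = t ^ 3 := by
    rw [ht, ← Real.rpow_natCast (_ ^ _), ← Real.rpow_mul hn0.le]
    norm_num
  have h23 : (n : ℝ) ^ ((2 : ℝ)/3) = t ^ 2 := by
    rw [ht, ← Real.rpow_natCast (_ ^ _), ← Real.rpow_mul hn0.le]
    norm_num
  have hinv : (n : ℝ) ^ (-(1 : ℝ)/3) = t⁻¹ := by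
    rw [show (-(1:ℝ)/3) = -((1:ℝ)/3) by ring, Real.rpow_neg hn0.le]
  have ht10 : (10 : ℝ) ≤ t := by
    have h1 : ((1000 : ℕ) : ℝ) ≤ (n : ℝ) := by exact_mod_cast hN
    calc (10 : ℝ) = (1000 : ℝ) ^ ((1:ℝ)/3) := by
          rw [show (1000 : ℝ) = 10 ^ (3:ℕ) by norm_num, ← Real.rpow_natCast (10:ℝ),
            ← Real.rpow_mul (by norm_num)]
          norm_num
      _ ≤ t := by
          apply Real.rpow_le_rpow (by norm_num) (by exact_mod_cast h1) (by norm_num)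
  have hk2 : ((k : ℝ)) ^ 2 = t ^ 3 := by
    rw [← hnt, hn]; push_cast; ring
  -- key bound on coordinates
  have key : ∀ i : ℕ, i < k → 4 * Real.sin (i * Real.pi / (2 * k)) ^ 2 < t⁻¹ →
      (i : ℝ) < t / 2 := by
    intro i hik hsin
    have hkR : (0 : ℝ) < k := by exact_mod_cast hk
    have hx0 : (0 : ℝ) ≤ i * Real.pi / (2 * k) := by positivity
    have hx1 : (i : ℝ) * Real.pi / (2 * k) ≤ Real.pi / 2 := by
      rw [div_le_div_iff₀ (by positivity) (by norm_num)]
      have : (i : ℝ) ≤ k := by exact_mod_cast hik.le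
      nlinarith [Real.pi_pos]
    have hjordan := Real.mul_le_sin hx0 hx1
    have hsin0 : (i : ℝ) / k ≤ Real.sin (i * Real.pi / (2 * k)) := by
      have hpi := Real.pi_pos
      calc (i : ℝ) / k = 2 / Real.pi * (i * Real.pi / (2 * k)) := by
            field_simp
        _ ≤ _ := hjordan
    have h1 : 4 * ((i : ℝ) / k) ^ 2 ≤ 4 * Real.sin (i * Real.pi / (2 * k)) ^ 2 := by
      have : ((i : ℝ) / k) ^ 2 ≤ Real.sin (i * Real.pi / (2 * k)) ^ 2 :=
        pow_le_pow_left₀ (by positivity) hsin0 2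
      linarith
    have h2 : 4 * ((i : ℝ) / k) ^ 2 < t⁻¹ := lt_of_le_of_lt h1 hsin
    have h3 : (2 * (i : ℝ)) ^ 2 < t ^ 2 := by
      have hkpos : (0 : ℝ) < (k : ℝ) ^ 2 := by positivity
      have : 4 * (i : ℝ) ^ 2 < (k : ℝ) ^ 2 * t⁻¹ := by
        rw [div_pow] at h2
        calc 4 * (i : ℝ) ^ 2 = (4 * ((i:ℝ)^2 / (k:ℝ)^2)) * (k:ℝ)^2 := by
              field_simp
          _ < t⁻¹ * (k:ℝ)^2 := mul_lt_mul_of_pos_right h2 hkpos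
          _ = (k : ℝ) ^ 2 * t⁻¹ := by ring
      have : (k : ℝ) ^ 2 * t⁻¹ = t ^ 2 := by
        rw [hk2]; field_simp
      nlinarith
    have h4 : 2 * (i : ℝ) < t :=
      lt_of_pow_lt_pow_left₀ 2 ht0.le h3
    linarith
  -- subset bound
  set m : ℕ := Nat.floor (t / 2) + 1 with hm
  have hsub : ((Finset.range k ×ˢ Finset.range k).filter fun q : ℕ × ℕ =>
          4 * Real.sin (q.1 * Real.pi / (2 * k)) ^ 2
            + 4 * Real.sin (q.2 * Real.pi / (2 * k)) ^ 2
            < (n : ℝ) ^ (-(1 : ℝ) / 3)) ⊆ Finset.range m ×ˢ Finset.range m := by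
    intro q hq
    simp only [Finset.mem_filter, Finset.mem_product, Finset.mem_range] at hq ⊢
    obtain ⟨⟨h1, h2⟩, hlt⟩ := hq
    rw [hinv] at hlt
    have hs1 : (0:ℝ) ≤ 4 * Real.sin (q.1 * Real.pi / (2 * k)) ^ 2 := by positivity
    have hs2 : (0:ℝ) ≤ 4 * Real.sin (q.2 * Real.pi / (2 * k)) ^ 2 := by positivity
    have k1 := key q.1 h1 (by linarith)
    have k2 := key q.2 h2 (by linarith)
    constructor
    · have : q.1 ≤ Nat.floor (t / 2) := Nat.le_floor k1.le
      omega
    · have : q.2 ≤ Nat.floor (t / 2) := Nat.le_floor k2.le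
      omega
  have hcard : (((Finset.range k ×ˢ Finset.range k).filter fun q : ℕ × ℕ =>
          4 * Real.sin (q.1 * Real.pi / (2 * k)) ^ 2
            + 4 * Real.sin (q.2 * Real.pi / (2 * k)) ^ 2
            < (n : ℝ) ^ (-(1 : ℝ) / 3)).card) ≤ m * m := by
    have := Finset.card_le_card hsub
    simpa [Finset.card_product] using this
  have hmR : (m : ℝ) ≤ t / 2 + 1 := by
    have := Nat.floor_le (by positivity : (0:ℝ) ≤ t / 2)
    push_cast [hm]
    linarith
  have hcardR : (((Finset.range k ×ˢ Finset.range k).filter fun q : ℕ × ℕ =>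
          4 * Real.sin (q.1 * Real.pi / (2 * k)) ^ 2
            + 4 * Real.sin (q.2 * Real.pi / (2 * k)) ^ 2
            < (n : ℝ) ^ (-(1 : ℝ) / 3)).card : ℝ) ≤ (m : ℝ) * m := by
    exact_mod_cast hcard
  rw [h23]
  have hmpos : (0:ℝ) ≤ (m:ℝ) := by positivity
  nlinarith [hcardR, hmR, ht10]
end

section
/- For every real s with 0 < s ≤ π/2, the double integral of the function (x,y) ↦ 1/(x² + y²)² over the square [s, π] × [s, π] is at least (π/6)·(1/(8s²) − 1/(2π²)). (This follows by restricting to the polar sector {(r cos θ, r sin θ) : 2s ≤ r ≤ π, π/6 ≤ θ ≤ π/3}, which is contained in the square.) -/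
/-!
The integrand is nonnegative, so the integral over the square dominates the integral over the
polar sector `2s ≤ r ≤ π`, `π/6 ≤ θ ≤ π/3`, which lies in the square because `cos θ` and `sin θ`
both lie in `[1/2, 1]` there. In polar coordinates the integrand is `r⁻⁴` and the Jacobian is `r`,
so the sector integral is `(π/6) ∫_{2s}^{π} r⁻³ dr = (π/6) (1/(8s²) - 1/(2π²))`.
-/

open Real MeasureTheory

open Set

theorem setIntegral_image_polarCoord_symm {E : Type*} [NormedAddCommGroup E] [NormedSpace ℝ E]
    {B : Set (ℝ × ℝ)} (hB : MeasurableSet B) (hBt : B ⊆ polarCoord.target) (g : ℝ × ℝ → E) :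
    ∫ x in polarCoord.symm '' B, g x = ∫ p in B, p.1 • g (polarCoord.symm p) := by
  rw [integral_image_eq_integral_abs_det_fderiv_smul volume hB
    (fun p _ ↦ (hasFDerivAt_polarCoord_symm p).hasFDerivWithinAt)
    (polarCoord.symm.injOn.mono hBt)]
  refine setIntegral_congr_fun hB fun p hp ↦ ?_
  rw [det_fderivPolarCoordSymm, abs_of_pos (hBt hp).1]

theorem Icc_prod_Icc_subset_polarCoord_target {a b c d : ℝ} (ha : 0 < a) (hc : -π < c)
    (hd : d < π) : Icc a b ×ˢ Icc c d ⊆ polarCoord.target := fun _ ⟨hr, hθ⟩ ↦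
  ⟨ha.trans_le hr.1, hc.trans_le hθ.1, hθ.2.trans_lt hd⟩

theorem polarCoord_symm_fst_sq_add_snd_sq (p : ℝ × ℝ) :
    (polarCoord.symm p).1 ^ 2 + (polarCoord.symm p).2 ^ 2 = p.1 ^ 2 := by
  simp only [polarCoord_symm_apply]
  linear_combination p.1 ^ 2 * cos_sq_add_sin_sq p.2

theorem one_half_le_cos_of_nonneg_of_le_pi_div_three {θ : ℝ} (h₀ : 0 ≤ θ) (h : θ ≤ π / 3) :
    1 / 2 ≤ cos θ := by
  rw [← cos_pi_div_three]
  exact cos_le_cos_of_nonneg_of_le_pi h₀ (by linarith [pi_pos]) h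

theorem one_half_le_sin_of_pi_div_six_le_of_le_pi_div_two {θ : ℝ} (h₀ : π / 6 ≤ θ)
    (h : θ ≤ π / 2) : 1 / 2 ≤ sin θ := by
  rw [← sin_pi_div_six]
  exact sin_le_sin_of_le_of_le_pi_div_two (by linarith [pi_pos]) h h₀

theorem mul_mem_Icc_of_mem_Icc_two_mul {a b r c : ℝ} (ha : 0 ≤ a) (hr : r ∈ Icc (2 * a) b)
    (hc : 1 / 2 ≤ c) (hc' : c ≤ 1) : r * c ∈ Icc a b := by
  have hr₀ : 0 ≤ r := by linarith [hr.1]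
  exact ⟨by nlinarith [hr.1], by nlinarith [hr.2]⟩

theorem polarCoord_symm_image_subset_Icc_prod_Icc {a b : ℝ} (ha : 0 ≤ a) :
    polarCoord.symm '' (Icc (2 * a) b ×ˢ Icc (π / 6) (π / 3)) ⊆ Icc a b ×ˢ Icc a b := by
  rintro _ ⟨⟨r, θ⟩, ⟨hr, hθ₁, hθ₂⟩, rfl⟩
  have hθ₀ : 0 ≤ θ := by linarith [pi_pos]
  have hθ₂' : θ ≤ π / 2 := by linarith [pi_pos]
  exact ⟨mul_mem_Icc_of_mem_Icc_two_mul ha hr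
      (one_half_le_cos_of_nonneg_of_le_pi_div_three hθ₀ hθ₂) (cos_le_one θ),
    mul_mem_Icc_of_mem_Icc_two_mul ha hr
      (one_half_le_sin_of_pi_div_six_le_of_le_pi_div_two hθ₁ hθ₂') (sin_le_one θ)⟩

theorem integral_one_div_pow_three {a b : ℝ} (ha : 0 < a) (hb : 0 < b) :
    ∫ r in a..b, 1 / r ^ 3 = 1 / (2 * a ^ 2) - 1 / (2 * b ^ 2) := by
  have h₀ : (0 : ℝ) ∉ uIcc a b := fun h ↦ by
    rcases mem_uIcc.mp h with h | h <;> linarith [h.1]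
  simp_rw [one_div, ← zpow_natCast, ← zpow_neg]
  rw [integral_zpow (Or.inr ⟨by norm_num, h₀⟩)]
  norm_num
  field_simp
  ring

theorem setIntegral_Icc_prod_Icc_polarCoord_symm_inv_sq_sum_sq {a b c d : ℝ} (ha : 0 < a)
    (hab : a ≤ b) (hcd : c ≤ d) :
    ∫ p in Icc a b ×ˢ Icc c d,
        p.1 • (1 / ((polarCoord.symm p).1 ^ 2 + (polarCoord.symm p).2 ^ 2) ^ 2)
      = (1 / (2 * a ^ 2) - 1 / (2 * b ^ 2)) * (d - c) := by
  have h_polar : ∀ p ∈ Icc a b ×ˢ Icc c d,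
      p.1 • (1 / ((polarCoord.symm p).1 ^ 2 + (polarCoord.symm p).2 ^ 2) ^ 2)
        = 1 / p.1 ^ 3 * 1 := fun p hp ↦ by
    have : p.1 ≠ 0 := (ha.trans_le hp.1.1).ne'
    rw [polarCoord_symm_fst_sq_add_snd_sq, smul_eq_mul]
    field_simp
  rw [setIntegral_congr_fun (measurableSet_Icc.prod measurableSet_Icc) h_polar,
    Measure.volume_eq_prod, setIntegral_prod_mul (fun r ↦ 1 / r ^ 3) (fun _ ↦ (1 : ℝ)),
    integral_Icc_eq_integral_Ioc, ← intervalIntegral.integral_of_le hab,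
    integral_one_div_pow_three ha (ha.trans_le hab)]
  simp [hcd]

theorem integrableOn_Icc_prod_Icc_inv_sq_sum_sq {a b c d : ℝ} (ha : 0 < a) :
    IntegrableOn (fun q : ℝ × ℝ ↦ 1 / (q.1 ^ 2 + q.2 ^ 2) ^ 2) (Icc a b ×ˢ Icc c d) := by
  refine ContinuousOn.integrableOn_compact (isCompact_Icc.prod isCompact_Icc) ?_
  refine continuousOn_const.div (by fun_prop) fun q hq ↦ ?_
  have : 0 < q.1 := ha.trans_le hq.1.1
  positivity

theorem double_integral_inv_sq_sum_sq_lower_bound (s : ℝ) (hs : 0 < s) (hs' : s ≤ Real.pi / 2) :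
    Real.pi / 6 * (1 / (8 * s ^ 2) - 1 / (2 * Real.pi ^ 2))
      ≤ ∫ q in Set.Icc s Real.pi ×ˢ Set.Icc s Real.pi,
          1 / (q.1 ^ 2 + q.2 ^ 2) ^ 2 := by
  set sector := Icc (2 * s) π ×ˢ Icc (π / 6) (π / 3)
  have h_target : sector ⊆ polarCoord.target :=
    Icc_prod_Icc_subset_polarCoord_target (by positivity) (by linarith [pi_pos])
      (by linarith [pi_pos])
  calc π / 6 * (1 / (8 * s ^ 2) - 1 / (2 * π ^ 2))
      = ∫ p in sector,
          p.1 • (1 / ((polarCoord.symm p).1 ^ 2 + (polarCoord.symm p).2 ^ 2) ^ 2) := by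
        rw [setIntegral_Icc_prod_Icc_polarCoord_symm_inv_sq_sum_sq (by positivity) (by linarith)
          (by linarith [pi_pos])]
        ring
    _ = ∫ q in polarCoord.symm '' sector, 1 / (q.1 ^ 2 + q.2 ^ 2) ^ 2 :=
        (setIntegral_image_polarCoord_symm (measurableSet_Icc.prod measurableSet_Icc) h_target
          (fun q ↦ 1 / (q.1 ^ 2 + q.2 ^ 2) ^ 2)).symm
    _ ≤ _ := setIntegral_mono_set (integrableOn_Icc_prod_Icc_inv_sq_sum_sq hs)
        (ae_of_all _ fun _ ↦ by positivity)
        (polarCoord_symm_image_subset_Icc_prod_Icc hs.le).eventuallyLE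
end

section
/- There exists N ∈ ℕ such that for every perfect square n = k² ≥ N (k ∈ ℕ), the sum over all pairs (i,j) with i, j ∈ {0, 1, …, k−1} and (i,j) ≠ (0,0) of 1/(4·sin²(iπ/(2k)) + 4·sin²(jπ/(2k)))² is strictly greater than (n/(24π³))·(n/4 − 1). -/
open Real Finset

theorem lattice_inverse_eigenvalue_sq_sum_lower_bound :
    ∃ N : ℕ, ∀ n k : ℕ, n = k ^ 2 → N ≤ n →
      (n : ℝ) / (24 * Real.pi ^ 3) * ((n : ℝ) / 4 - 1)
        < ∑ q ∈ (Finset.range k ×ˢ Finset.range k).erase (0, 0),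
            1 / (4 * Real.sin (q.1 * Real.pi / (2 * k)) ^ 2
                  + 4 * Real.sin (q.2 * Real.pi / (2 * k)) ^ 2) ^ 2 := by
  use 4
  intro n k hn hN
  subst hn
  have hk : 2 ≤ k := by nlinarith [Nat.lt_or_ge k 2]
  have hkR : (2 : ℝ) ≤ (k : ℝ) := by exact_mod_cast hk
  have hkpos : (0 : ℝ) < (k : ℝ) := by linarith
  have hpi := Real.pi_pos
  -- the single term at (1,0)
  have hmem : ((1, 0) : ℕ × ℕ) ∈ (Finset.range k ×ˢ Finset.range k).erase (0, 0) := by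
    simp [Finset.mem_erase, Finset.mem_product, Finset.mem_range]
    omega
  have hnonneg : ∀ q ∈ (Finset.range k ×ˢ Finset.range k).erase (0, 0),
      (0 : ℝ) ≤ 1 / (4 * Real.sin (q.1 * Real.pi / (2 * k)) ^ 2
                  + 4 * Real.sin (q.2 * Real.pi / (2 * k)) ^ 2) ^ 2 := by
    intro q _
    positivity
  have hsingle := Finset.single_le_sum hnonneg hmem
  -- estimate the single term
  set s := Real.sin (Real.pi / (2 * k)) with hs
  have harg_pos : 0 < Real.pi / (2 * k) := by positivity
  have harg_lt : Real.pi / (2 * k) < Real.pi := by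
    rw [div_lt_iff₀ (by positivity)]
    nlinarith
  have hspos : 0 < s := Real.sin_pos_of_pos_of_lt_pi harg_pos harg_lt
  have hsle : s ≤ Real.pi / (2 * k) := le_of_lt (Real.sin_lt harg_pos)
  have hterm : (1 : ℝ) / (4 * Real.sin ((1:ℕ) * Real.pi / (2 * k)) ^ 2
                  + 4 * Real.sin ((0:ℕ) * Real.pi / (2 * k)) ^ 2) ^ 2
      = 1 / (16 * s ^ 4) := by
    have e1 : ((1:ℕ) : ℝ) * Real.pi / (2 * k) = Real.pi / (2 * k) := by push_cast; ring
    have e0 : ((0:ℕ) : ℝ) * Real.pi / (2 * k) = 0 := by push_cast; ring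
    rw [e1, e0, Real.sin_zero, ← hs]
    ring
  have hkey : (k : ℝ) ^ 2 / (24 * Real.pi ^ 3) * ((k : ℝ) ^ 2 / 4 - 1)
      < 1 / (16 * s ^ 4) := by
    have h1 : 16 * s ^ 4 ≤ Real.pi ^ 4 / (k : ℝ) ^ 4 := by
      have : s ^ 4 ≤ (Real.pi / (2 * k)) ^ 4 := by
        apply pow_le_pow_left₀ (le_of_lt hspos) hsle
      calc 16 * s ^ 4 ≤ 16 * (Real.pi / (2 * k)) ^ 4 := by linarith
        _ = Real.pi ^ 4 / (k : ℝ) ^ 4 := by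
            field_simp; ring
    have h2 : (1 : ℝ) / (Real.pi ^ 4 / (k : ℝ) ^ 4) ≤ 1 / (16 * s ^ 4) :=
      one_div_le_one_div_of_le (by positivity) h1
    have h3 : (1 : ℝ) / (Real.pi ^ 4 / (k : ℝ) ^ 4) = (k : ℝ) ^ 4 / Real.pi ^ 4 := by
      field_simp
    have h4 : (k : ℝ) ^ 2 / (24 * Real.pi ^ 3) * ((k : ℝ) ^ 2 / 4 - 1)
        < (k : ℝ) ^ 4 / Real.pi ^ 4 := by
      rw [div_mul_eq_mul_div, div_lt_div_iff₀ (by positivity) (by positivity)]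
      have hpi4 : Real.pi < 4 := Real.pi_lt_d2.trans (by norm_num)
      have h5 : Real.pi * ((k:ℝ) ^ 2 * ((k:ℝ) ^ 2 / 4 - 1)) < 24 * (k:ℝ) ^ 4 := by
        have hk4 : (4:ℝ) ≤ (k:ℝ) ^ 2 := by nlinarith
        have h6 : 0 ≤ (k:ℝ) ^ 2 * ((k:ℝ) ^ 2 / 4 - 1) := by
          nlinarith [mul_nonneg (sq_nonneg ((k:ℝ))) (by linarith : (0:ℝ) ≤ (k:ℝ) ^ 2 - 4)]
        nlinarith [mul_le_mul_of_nonneg_right hpi4.le h6, pow_pos hkpos 4, pow_pos hkpos 2]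
      nlinarith [mul_lt_mul_of_pos_right h5 (pow_pos hpi 3)]
    linarith [h2, h3 ▸ h2]
  calc (↑(k ^ 2) : ℝ) / (24 * Real.pi ^ 3) * ((↑(k ^ 2) : ℝ) / 4 - 1)
      = (k : ℝ) ^ 2 / (24 * Real.pi ^ 3) * ((k : ℝ) ^ 2 / 4 - 1) := by push_cast; ring
    _ < 1 / (16 * s ^ 4) := hkey
    _ = 1 / (4 * Real.sin ((1:ℕ) * Real.pi / (2 * k)) ^ 2
                  + 4 * Real.sin ((0:ℕ) * Real.pi / (2 * k)) ^ 2) ^ 2 := hterm.symm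
    _ ≤ _ := hsingle
end

section
/- Let U ∈ ℝ^{n×n} be orthogonal (UᵀU = I), let Λ = diag(τ₁, …, τ_n) with all τ_i ≥ 0, let α ≥ 0, let Θ ∈ ℝ^{p×p} be symmetric positive definite, let B₀, E ∈ ℝ^{n×p}, and set X = UB₀ + E. Then the function B ↦ tr(Θ(X − UB)ᵀ(X − UB)) + α·tr(BᵀΛB) on ℝ^{n×p} has a unique minimizer B̂, and the error matrix W = B₀ − B̂ satisfies the estimating equation WΘ + αΛW = αΛB₀ − UᵀEΘ. -/
/-! With the Sylvester operator `S C = C Θ + A C` (here `A = α Λ`) and the trace pairing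
`⟨P, Q⟩ = tr (Pᵀ Q)`, the objective is the quadratic `tr (Θ Xᵀ X) - 2 ⟨B, Uᵀ X Θ⟩ + ⟨B, S B⟩`.
For symmetric `Θ` and `A`, `S` is self-adjoint for this pairing, and `⟨C, S C⟩ > 0` for `C ≠ 0`
when `Θ ≻ 0` and `A ⪰ 0`. So `S` is injective, hence surjective, the normal equation
`S B̂ = Uᵀ X Θ` has a solution, and completing the square gives
`g B = g B̂ + ⟨B - B̂, S (B - B̂)⟩`: `B̂` is the unique minimizer. Substituting `X = U B₀ + E`
in the normal equation gives the equation for `B₀ - B̂`. -/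

open Matrix

variable {l m k : Type*} [Fintype l] [Fintype m] [Fintype k]

def sylvesterMap (A : Matrix m m ℝ) (Θ : Matrix k k ℝ) : Matrix m k ℝ →ₗ[ℝ] Matrix m k ℝ where
  toFun C := C * Θ + A * C
  map_add' C D := by simp only [Matrix.add_mul, Matrix.mul_add]; abel
  map_smul' c C := by simp only [Matrix.smul_mul, Matrix.mul_smul, smul_add, RingHom.id_apply]

lemma sylvesterMap_apply (A : Matrix m m ℝ) (Θ : Matrix k k ℝ) (C : Matrix m k ℝ) :
    sylvesterMap A Θ C = C * Θ + A * C := rfl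

lemma trace_transpose_mul_sylvesterMap_comm {A : Matrix m m ℝ} {Θ : Matrix k k ℝ}
    (hA : Aᵀ = A) (hΘ : Θᵀ = Θ) (P Q : Matrix m k ℝ) :
    (Pᵀ * sylvesterMap A Θ Q).trace = (Qᵀ * sylvesterMap A Θ P).trace := by
  simp only [sylvesterMap_apply, Matrix.mul_add, trace_add]
  congr 1
  · rw [← trace_transpose, transpose_mul, transpose_mul, transpose_transpose, hΘ,
      ← trace_mul_cycle, Matrix.mul_assoc]
  · rw [← trace_transpose]
    simp only [transpose_mul, transpose_transpose, hA, Matrix.mul_assoc]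

lemma trace_mul_mul_transpose_pos {Θ : Matrix k k ℝ} (hΘ : Θ.PosDef) {C : Matrix m k ℝ}
    (hC : C ≠ 0) : 0 < (C * Θ * Cᵀ).trace := by
  have hdiag : ∀ i, (C * Θ * Cᵀ) i i = star (C i) ⬝ᵥ (Θ *ᵥ C i) := by
    intro i
    rw [Matrix.mul_apply_eq_vecMul, star_trivial, dotProduct_mulVec]
    rfl
  obtain ⟨i, hi⟩ : ∃ i, C i ≠ 0 := by
    by_contra! h
    exact hC (funext h)
  refine Finset.sum_pos' (fun j _ => ?_) ⟨i, Finset.mem_univ i, ?_⟩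
  · rw [diag_apply, hdiag]; exact hΘ.posSemidef.dotProduct_mulVec_nonneg (C j)
  · rw [diag_apply, hdiag]; exact hΘ.dotProduct_mulVec_pos hi

lemma trace_transpose_mul_sylvesterMap_pos {A : Matrix m m ℝ} {Θ : Matrix k k ℝ}
    (hA : A.PosSemidef) (hΘ : Θ.PosDef) {C : Matrix m k ℝ} (hC : C ≠ 0) :
    0 < (Cᵀ * sylvesterMap A Θ C).trace := by
  have hAC : 0 ≤ (Cᵀ * A * C).trace := by
    simpa using (hA.conjTranspose_mul_mul_same C).trace_nonneg
  rw [sylvesterMap_apply, Matrix.mul_add, trace_add, ← Matrix.mul_assoc, ← Matrix.mul_assoc,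
    ← trace_mul_cycle]
  linarith [trace_mul_mul_transpose_pos hΘ hC]

lemma sylvesterMap_surjective {A : Matrix m m ℝ} {Θ : Matrix k k ℝ}
    (hA : A.PosSemidef) (hΘ : Θ.PosDef) : Function.Surjective (sylvesterMap A Θ) := by
  refine LinearMap.injective_iff_surjective.1 <| (injective_iff_map_eq_zero _).2 fun C hC => ?_
  by_contra hC0
  have := trace_transpose_mul_sylvesterMap_pos hA hΘ hC0
  rw [hC, Matrix.mul_zero, trace_zero] at this
  exact this.false

def weightedRidgeLoss (U : Matrix l m ℝ) (X : Matrix l k ℝ) (Θ : Matrix k k ℝ)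
    (A : Matrix m m ℝ) (B : Matrix m k ℝ) : ℝ :=
  (Θ * (X - U * B)ᵀ * (X - U * B)).trace + (Bᵀ * A * B).trace

lemma weightedRidgeLoss_eq [DecidableEq m] {U : Matrix l m ℝ} (hU : Uᵀ * U = 1)
    (X : Matrix l k ℝ) {Θ : Matrix k k ℝ} (hΘ : Θᵀ = Θ) (A : Matrix m m ℝ) (B : Matrix m k ℝ) :
    weightedRidgeLoss U X Θ A B = (Θ * Xᵀ * X).trace - 2 * (Bᵀ * (Uᵀ * X * Θ)).trace
      + (Bᵀ * sylvesterMap A Θ B).trace := by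
  have hcross₁ : (Θ * Xᵀ * (U * B)).trace = (Bᵀ * (Uᵀ * X * Θ)).trace := by
    rw [← trace_transpose]
    simp only [transpose_mul, transpose_transpose, hΘ, Matrix.mul_assoc]
  have hcross₂ : (Θ * (U * B)ᵀ * X).trace = (Bᵀ * (Uᵀ * X * Θ)).trace := by
    rw [transpose_mul, ← trace_mul_cycle]
    simp only [Matrix.mul_assoc]
  have hsquare : (Θ * (U * B)ᵀ * (U * B)).trace = (Bᵀ * (B * Θ)).trace := by
    rw [transpose_mul, Matrix.mul_assoc, Matrix.mul_assoc, ← Matrix.mul_assoc Uᵀ, hU,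
      Matrix.one_mul, trace_mul_comm, Matrix.mul_assoc]
  simp only [weightedRidgeLoss, sylvesterMap_apply, transpose_sub, Matrix.mul_sub, Matrix.sub_mul,
    Matrix.mul_add, trace_sub, trace_add]
  rw [hcross₁, hcross₂, hsquare, Matrix.mul_assoc Bᵀ A B]
  ring

lemma weightedRidgeLoss_eq_add [DecidableEq m] {U : Matrix l m ℝ} (hU : Uᵀ * U = 1)
    (X : Matrix l k ℝ) {Θ : Matrix k k ℝ} (hΘ : Θᵀ = Θ) {A : Matrix m m ℝ} (hA : Aᵀ = A)
    {Bhat : Matrix m k ℝ} (hBhat : sylvesterMap A Θ Bhat = Uᵀ * X * Θ) (B : Matrix m k ℝ) :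
    weightedRidgeLoss U X Θ A B
      = weightedRidgeLoss U X Θ A Bhat + ((B - Bhat)ᵀ * sylvesterMap A Θ (B - Bhat)).trace := by
  have hsymm := trace_transpose_mul_sylvesterMap_comm hA hΘ B Bhat
  rw [weightedRidgeLoss_eq hU X hΘ, weightedRidgeLoss_eq hU X hΘ, map_sub, ← hBhat]
  simp only [transpose_sub, Matrix.mul_sub, Matrix.sub_mul, trace_sub]
  linarith

lemma forall_weightedRidgeLoss_le_iff [DecidableEq m] {U : Matrix l m ℝ} (hU : Uᵀ * U = 1)
    (X : Matrix l k ℝ) {Θ : Matrix k k ℝ} (hΘ : Θ.PosDef) {A : Matrix m m ℝ} (hA : A.PosSemidef)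
    {Bhat : Matrix m k ℝ} (hBhat : sylvesterMap A Θ Bhat = Uᵀ * X * Θ) (B' : Matrix m k ℝ) :
    (∀ B, weightedRidgeLoss U X Θ A B' ≤ weightedRidgeLoss U X Θ A B) ↔ B' = Bhat := by
  have hloss := weightedRidgeLoss_eq_add hU X (isHermitian_iff_isSymm.1 hΘ.isHermitian).eq
    (isHermitian_iff_isSymm.1 hA.isHermitian).eq hBhat
  constructor
  · intro hmin
    by_contra hne
    linarith [hmin Bhat, hloss B', trace_transpose_mul_sylvesterMap_pos hA hΘ (sub_ne_zero.2 hne)]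
  · rintro rfl B
    rw [hloss B]
    obtain h | h := eq_or_ne (B - B') 0
    · simp [h]
    · linarith [trace_transpose_mul_sylvesterMap_pos hA hΘ h]

theorem weighted_ridge_minimizer_error_equation
    (n p : ℕ) (U : Matrix (Fin n) (Fin n) ℝ) (hU : Uᵀ * U = 1)
    (τ : Fin n → ℝ) (hτ : ∀ i, 0 ≤ τ i) (α : ℝ) (hα : 0 ≤ α)
    (Θ : Matrix (Fin p) (Fin p) ℝ) (hΘ : Θ.PosDef)
    (B₀ E : Matrix (Fin n) (Fin p) ℝ) :
    let X : Matrix (Fin n) (Fin p) ℝ := U * B₀ + E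
    let Λ : Matrix (Fin n) (Fin n) ℝ := Matrix.diagonal τ
    let g : Matrix (Fin n) (Fin p) ℝ → ℝ := fun B =>
      (Θ * (X - U * B)ᵀ * (X - U * B)).trace + α * (Bᵀ * Λ * B).trace
    ∃ Bhat : Matrix (Fin n) (Fin p) ℝ,
      (∀ B, g Bhat ≤ g B) ∧
      (∀ B', (∀ B, g B' ≤ g B) → B' = Bhat) ∧
      (B₀ - Bhat) * Θ + α • (Λ * (B₀ - Bhat)) = α • (Λ * B₀) - Uᵀ * E * Θ := by
  intro X Λ g
  have hg : g = weightedRidgeLoss U X Θ (α • Λ) := by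
    funext B
    simp only [g, weightedRidgeLoss, Matrix.mul_smul, Matrix.smul_mul, trace_smul, smul_eq_mul]
  have hA : (α • Λ).PosSemidef := (PosSemidef.diagonal hτ).smul hα
  obtain ⟨Bhat, hBhat⟩ := sylvesterMap_surjective hA hΘ (Uᵀ * X * Θ)
  have hminimizer := forall_weightedRidgeLoss_le_iff hU X hΘ hA hBhat
  refine ⟨Bhat, hg ▸ (hminimizer Bhat).2 rfl, fun B' => hg ▸ (hminimizer B').1, ?_⟩
  have hX : Uᵀ * X = B₀ + Uᵀ * E := by
    rw [Matrix.mul_add, ← Matrix.mul_assoc, hU, Matrix.one_mul]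
  calc (B₀ - Bhat) * Θ + α • (Λ * (B₀ - Bhat))
      = sylvesterMap (α • Λ) Θ B₀ - sylvesterMap (α • Λ) Θ Bhat := by
        simp only [sylvesterMap_apply, Matrix.sub_mul, Matrix.mul_sub, Matrix.smul_mul, smul_sub]
        abel
    _ = α • (Λ * B₀) - Uᵀ * E * Θ := by
        rw [hBhat, hX, sylvesterMap_apply, Matrix.add_mul, Matrix.smul_mul]
        abel
end

section
/- Let Θ ∈ ℝ^{p×p} be symmetric positive definite and diagonally dominant in the sense that there is 0 ≤ ρ < 1 with Σ_{j'≠j} |Θ_{j'j}| ≤ ρ·Θ_{jj} for every j. Let α ≥ 0, let Λ = diag(τ₁,…,τ_n) with all τ_i ≥ 0, let D = diag(Θ₁₁,…,Θ_pp), and let R ∈ ℝ^{n×p}. Suppose W₂ ∈ ℝ^{n×p} satisfies W₂Θ + αΛW₂ = R and W₄ ∈ ℝ^{n×p} satisfies W₄D + αΛW₄ = R. Then (1 − ρ)·‖W₂‖_∞ ≤ ‖W₄‖_∞ ≤ (1 + ρ)·‖W₂‖_∞. -/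
/-!
Comparing the entries of `W₂Θ + αΛW₂ = R` and `W₄D + αΛW₄ = R` gives
`(W₄ - W₂)ᵢⱼ (Θⱼⱼ + ατᵢ) = ∑_{l ≠ j} (W₂)ᵢₗ Θₗⱼ`, and by diagonal dominance the right-hand side is
at most `ρ ‖W₂‖_∞ Θⱼⱼ ≤ ρ ‖W₂‖_∞ (Θⱼⱼ + ατᵢ)` in absolute value. Hence `‖W₄ - W₂‖_∞ ≤ ρ ‖W₂‖_∞`,
and both bounds follow from the triangle inequality.
-/

open Matrix Finset

/-- The maximum absolute entry norm `‖M‖_∞ = max_{ij} |M_{ij}|` of a matrix. -/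
noncomputable def maxAbsEntry {n p : ℕ} (M : Matrix (Fin n) (Fin p) ℝ) : ℝ :=
  ⨆ i, ⨆ j, |M i j|

section maxAbsEntry

variable {n p : ℕ}

lemma abs_le_maxAbsEntry (M : Matrix (Fin n) (Fin p) ℝ) (i : Fin n) (j : Fin p) :
    |M i j| ≤ maxAbsEntry M :=
  (le_ciSup (Set.finite_range fun j => |M i j|).bddAbove j).trans
    (le_ciSup (Set.finite_range fun i => ⨆ j, |M i j|).bddAbove i)

lemma maxAbsEntry_nonneg (M : Matrix (Fin n) (Fin p) ℝ) : 0 ≤ maxAbsEntry M :=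
  Real.iSup_nonneg fun _ => Real.iSup_nonneg fun _ => abs_nonneg _

lemma maxAbsEntry_le {M : Matrix (Fin n) (Fin p) ℝ} {c : ℝ} (hc : 0 ≤ c)
    (h : ∀ i j, |M i j| ≤ c) : maxAbsEntry M ≤ c :=
  Real.iSup_le (fun i => Real.iSup_le (h i) hc) hc

lemma maxAbsEntry_le_add_of_abs_sub_le {A B : Matrix (Fin n) (Fin p) ℝ} {ε : ℝ} (hε : 0 ≤ ε)
    (h : ∀ i j, |A i j - B i j| ≤ ε) : maxAbsEntry A ≤ maxAbsEntry B + ε :=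
  maxAbsEntry_le (add_nonneg (maxAbsEntry_nonneg B) hε) fun i j => by
    linarith [abs_sub_abs_le_abs_sub (A i j) (B i j), abs_le_maxAbsEntry B i j, h i j]

end maxAbsEntry

lemma abs_sum_mul_le_mul_sum_abs {ι : Type*} (s : Finset ι) (w b : ι → ℝ) {M : ℝ}
    (hw : ∀ l ∈ s, |w l| ≤ M) : |∑ l ∈ s, w l * b l| ≤ M * ∑ l ∈ s, |b l| :=
  calc |∑ l ∈ s, w l * b l| ≤ ∑ l ∈ s, |w l| * |b l| := by
        simpa only [abs_mul] using abs_sum_le_sum_abs (fun l => w l * b l) s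
    _ ≤ ∑ l ∈ s, M * |b l| :=
        sum_le_sum fun l hl => mul_le_mul_of_nonneg_right (hw l hl) (abs_nonneg _)
    _ = M * ∑ l ∈ s, |b l| := (mul_sum _ _ _).symm

section smoothing

variable {m k : Type*} [Fintype m] [Fintype k] [DecidableEq m] [DecidableEq k]

lemma mul_add_smul_diagonal_mul_apply (W : Matrix m k ℝ) (Θ : Matrix k k ℝ) (α : ℝ)
    (τ : m → ℝ) (i : m) (j : k) :
    (W * Θ + α • (diagonal τ * W)) i j =
      W i j * (Θ j j + α * τ i) + ∑ l ∈ univ.erase j, W i l * Θ l j := by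
  rw [Matrix.add_apply, Matrix.smul_apply, diagonal_mul, mul_apply,
    ← add_sum_erase _ _ (mem_univ j), smul_eq_mul]
  ring

lemma mul_diagonal_add_smul_diagonal_mul_apply (W : Matrix m k ℝ) (d : k → ℝ) (α : ℝ)
    (τ : m → ℝ) (i : m) (j : k) :
    (W * diagonal d + α • (diagonal τ * W)) i j = W i j * (d j + α * τ i) := by
  rw [Matrix.add_apply, Matrix.smul_apply, diagonal_mul, mul_diagonal, smul_eq_mul]
  ring

theorem abs_sub_le_of_diagonal_smoothing {Θ : Matrix k k ℝ} (hΘ : ∀ j, 0 < Θ j j) {ρ : ℝ}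
    (hρ : 0 ≤ ρ) (hdom : ∀ j, ∑ l ∈ univ.erase j, |Θ l j| ≤ ρ * Θ j j) {α : ℝ} (hα : 0 ≤ α)
    {τ : m → ℝ} (hτ : ∀ i, 0 ≤ τ i) {R W₂ W₄ : Matrix m k ℝ} {M : ℝ}
    (hM : ∀ i j, |W₂ i j| ≤ M)
    (hW₂ : W₂ * Θ + α • (diagonal τ * W₂) = R)
    (hW₄ : W₄ * diagonal (fun j => Θ j j) + α • (diagonal τ * W₄) = R) (i : m) (j : k) :
    |W₄ i j - W₂ i j| ≤ ρ * M := by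
  set c := Θ j j + α * τ i
  have hΘc : Θ j j ≤ c := le_add_of_nonneg_right (mul_nonneg hα (hτ i))
  have hc : 0 < c := (hΘ j).trans_le hΘc
  have hρM : 0 ≤ ρ * M := mul_nonneg hρ ((abs_nonneg _).trans (hM i j))
  have hdiff : (W₄ i j - W₂ i j) * c = ∑ l ∈ univ.erase j, W₂ i l * Θ l j := by
    have h₂ := mul_add_smul_diagonal_mul_apply W₂ Θ α τ i j
    have h₄ := mul_diagonal_add_smul_diagonal_mul_apply W₄ (fun j => Θ j j) α τ i j
    rw [hW₂] at h₂
    rw [hW₄] at h₄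
    linear_combination h₂ - h₄
  have hoff : |∑ l ∈ univ.erase j, W₂ i l * Θ l j| ≤ ρ * M * Θ j j :=
    calc _ ≤ M * ∑ l ∈ univ.erase j, |Θ l j| :=
          abs_sum_mul_le_mul_sum_abs _ _ _ fun l _ => hM i l
      _ ≤ M * (ρ * Θ j j) :=
          mul_le_mul_of_nonneg_left (hdom j) ((abs_nonneg _).trans (hM i j))
      _ = ρ * M * Θ j j := by ring
  refine le_of_mul_le_mul_right ?_ hc
  calc |W₄ i j - W₂ i j| * c = |∑ l ∈ univ.erase j, W₂ i l * Θ l j| := by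
        rw [← hdiff, abs_mul, abs_of_pos hc]
    _ ≤ ρ * M * Θ j j := hoff
    _ ≤ ρ * M * c := mul_le_mul_of_nonneg_left hΘc hρM

end smoothing

theorem weighted_vs_diagonal_smoothing_error_general
    (n p : ℕ)
    (Θ : Matrix (Fin p) (Fin p) ℝ) (hΘ : Θ.PosDef)
    (ρ : ℝ) (hρ₀ : 0 ≤ ρ)
    (hdom : ∀ j, ∑ j' ∈ Finset.univ.erase j, |Θ j' j| ≤ ρ * Θ j j)
    (α : ℝ) (hα : 0 ≤ α) (τ : Fin n → ℝ) (hτ : ∀ i, 0 ≤ τ i)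
    (R : Matrix (Fin n) (Fin p) ℝ)
    (W₂ W₄ : Matrix (Fin n) (Fin p) ℝ)
    (hW₂ : W₂ * Θ + α • (Matrix.diagonal τ * W₂) = R)
    (hW₄ : W₄ * Matrix.diagonal (fun j => Θ j j) + α • (Matrix.diagonal τ * W₄) = R) :
    (1 - ρ) * maxAbsEntry W₂ ≤ maxAbsEntry W₄ ∧
      maxAbsEntry W₄ ≤ (1 + ρ) * maxAbsEntry W₂ := by
  have hclose : ∀ i j, |W₄ i j - W₂ i j| ≤ ρ * maxAbsEntry W₂ :=
    abs_sub_le_of_diagonal_smoothing (fun _ => hΘ.diag_pos) hρ₀ hdom hα hτ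
      (abs_le_maxAbsEntry W₂) hW₂ hW₄
  have hε : 0 ≤ ρ * maxAbsEntry W₂ := mul_nonneg hρ₀ (maxAbsEntry_nonneg W₂)
  have h₂₄ := maxAbsEntry_le_add_of_abs_sub_le hε fun i j =>
    (abs_sub_comm _ _).trans_le (hclose i j)
  have h₄₂ := maxAbsEntry_le_add_of_abs_sub_le hε hclose
  constructor <;> linarith

theorem weighted_vs_diagonal_smoothing_error
    (n p : ℕ) (hn : 0 < n) (hp : 0 < p)
    (Θ : Matrix (Fin p) (Fin p) ℝ) (hΘ : Θ.PosDef)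
    (ρ : ℝ) (hρ₀ : 0 ≤ ρ) (hρ₁ : ρ < 1)
    (hdom : ∀ j, ∑ j' ∈ Finset.univ.erase j, |Θ j' j| ≤ ρ * Θ j j)
    (α : ℝ) (hα : 0 ≤ α) (τ : Fin n → ℝ) (hτ : ∀ i, 0 ≤ τ i)
    (R : Matrix (Fin n) (Fin p) ℝ)
    (W₂ W₄ : Matrix (Fin n) (Fin p) ℝ)
    (hW₂ : W₂ * Θ + α • (Matrix.diagonal τ * W₂) = R)
    (hW₄ : W₄ * Matrix.diagonal (fun j => Θ j j) + α • (Matrix.diagonal τ * W₄) = R) :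
    (1 - ρ) * maxAbsEntry W₂ ≤ maxAbsEntry W₄ ∧
      maxAbsEntry W₄ ≤ (1 + ρ) * maxAbsEntry W₂ :=
  weighted_vs_diagonal_smoothing_error_general n p Θ hΘ ρ hρ₀ hdom α hα τ hτ R W₂ W₄ hW₂ hW₄
end
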